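/- arXiv:2602.01553 — 3 statements merged into one kernel-verified Lean document; each statement's English description precedes it below -/
import Mathlib

section
/- Let G be a finite simple undirected graph on node set V with neighborhoods N(w) := {x ∈ V : x is adjacent to w}. Let (h_w^{(0)})_{w ∈ V} be random vectors in ℝ^d, each with finite second moments, satisfying E[⟨h_w^{(0)}, h_{w'}^{(0)}⟩] = 1 if w = w' and E[⟨h_w^{(0)}, h_{w'}^{(0)}⟩] = 0 if w ≠ w' (zero-mean, unit-norm-in-expectation, pairwise uncorrelated initial features). Define one layer of sum-aggregation message passing by h_v^{(1)} := Σ_{w ∈ N(v)} h_w^{(0)} for each v ∈ V. Then for every pair of nodes u, v ∈ V, the inner product of the resulting embeddings is an unbiased estimator of their common-neighbor count: E[⟨h_u^{(1)}, h_v^{(1)}⟩] = |N(u) ∩ N(v)|. -/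
open MeasureTheory

section

variable {ι Ω E : Type*} [MeasurableSpace Ω] {μ : Measure Ω}
  [NormedAddCommGroup E] [InnerProductSpace ℝ E] {f : ι → Ω → E}

theorem integral_inner_sum_sum
    (hInt : ∀ i j, Integrable (fun ω => (inner ℝ (f i ω) (f j ω) : ℝ)) μ)
    (s t : Finset ι) :
    ∫ ω, (inner ℝ (∑ i ∈ s, f i ω) (∑ j ∈ t, f j ω) : ℝ) ∂μ
      = ∑ i ∈ s, ∑ j ∈ t, ∫ ω, (inner ℝ (f i ω) (f j ω) : ℝ) ∂μ := by
  simp_rw [sum_inner, inner_sum]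
  rw [integral_finsetSum _ fun i _ => integrable_finsetSum _ fun j _ => hInt i j]
  exact Finset.sum_congr rfl fun i _ => integral_finsetSum _ fun j _ => hInt i j

theorem integral_inner_sum_sum_of_orthonormal [DecidableEq ι]
    (hInt : ∀ i j, Integrable (fun ω => (inner ℝ (f i ω) (f j ω) : ℝ)) μ)
    (hOrtho : ∀ i j, ∫ ω, (inner ℝ (f i ω) (f j ω) : ℝ) ∂μ = if i = j then 1 else 0)
    (s t : Finset ι) :
    ∫ ω, (inner ℝ (∑ i ∈ s, f i ω) (∑ j ∈ t, f j ω) : ℝ) ∂μ = ((s ∩ t).card : ℝ) := by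
  simp only [integral_inner_sum_sum hInt, hOrtho, Finset.sum_ite_eq, Finset.sum_boole,
    Finset.filter_mem_eq_inter]

end

theorem stmt_7_general {V : Type*} [Fintype V] [DecidableEq V]
    (G : SimpleGraph V) [DecidableRel G.Adj]
    {d : ℕ} {Ω : Type*} [MeasurableSpace Ω] (μ : Measure Ω)
    (h0 : V → Ω → EuclideanSpace ℝ (Fin d))
    (hInt : ∀ w w' : V, Integrable (fun ω => (inner ℝ (h0 w ω) (h0 w' ω) : ℝ)) μ)
    (hOrtho : ∀ w w' : V,
      (∫ ω, (inner ℝ (h0 w ω) (h0 w' ω) : ℝ) ∂μ) = if w = w' then 1 else 0)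
    (u v : V) :
    (∫ ω, (inner ℝ (∑ w ∈ G.neighborFinset u, h0 w ω)
        (∑ w ∈ G.neighborFinset v, h0 w ω) : ℝ) ∂μ)
      = ((G.neighborFinset u ∩ G.neighborFinset v).card : ℝ) :=
  integral_inner_sum_sum_of_orthonormal hInt hOrtho _ _

/-- One layer of sum-aggregation message passing over random initial node features that
are zero-mean, unit-norm in expectation, and pairwise uncorrelated
(`E[⟨h⁰_w, h⁰_{w'}⟩] = δ_{w w'}`) yields an unbiased estimator of the common-neighbor
count: `E[⟨h¹_u, h¹_v⟩] = |N(u) ∩ N(v)|`, where `h¹_v = ∑_{w ∈ N(v)} h⁰_w`. -/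
theorem stmt_7 {V : Type*} [Fintype V] [DecidableEq V]
    (G : SimpleGraph V) [DecidableRel G.Adj]
    {d : ℕ} {Ω : Type*} [MeasurableSpace Ω] (μ : Measure Ω) [IsProbabilityMeasure μ]
    (h0 : V → Ω → EuclideanSpace ℝ (Fin d))
    (hInt : ∀ w w' : V, Integrable (fun ω => (inner ℝ (h0 w ω) (h0 w' ω) : ℝ)) μ)
    (hOrtho : ∀ w w' : V,
      (∫ ω, (inner ℝ (h0 w ω) (h0 w' ω) : ℝ) ∂μ) = if w = w' then 1 else 0)
    (u v : V) :
    (∫ ω, (inner ℝ (∑ w ∈ G.neighborFinset u, h0 w ω)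
        (∑ w ∈ G.neighborFinset v, h0 w ω) : ℝ) ∂μ)
      = ((G.neighborFinset u ∩ G.neighborFinset v).card : ℝ) :=
  stmt_7_general G μ h0 hInt hOrtho u v
end

section
/- Let G be a finite simple undirected graph on node set V with symmetric 0/1 adjacency matrix A and neighborhoods N(w) := {x ∈ V : x is adjacent to w}. Let (h_w^{(0)})_{w ∈ V} be random vectors in ℝ^d, each with finite second moments, satisfying E[⟨h_w^{(0)}, h_{w'}^{(0)}⟩] = 1 if w = w' and 0 otherwise. Define sum-aggregation message passing iteratively by h_v^{(t)} := Σ_{w ∈ N(v)} h_w^{(t-1)} for t ≥ 1. Then for all integers p, q ≥ 0 and all nodes u, v ∈ V, E[⟨h_u^{(p)}, h_v^{(q)}⟩] = Σ_{k ∈ V} (A^p)_{k u} (A^q)_{k v}, where (A^ℓ)_{a b} equals the number of walks of length ℓ between nodes a and b. -/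
open MeasureTheory

/-! Unrolling the recursion gives `h⁽ᵗ⁾_w = ∑ₖ (Aᵗ)_{k w} • h⁽⁰⁾_k`, because
`(Aᵗ⁺¹)_{k w} = ∑_{x ∈ N(w)} (Aᵗ)_{k x}`. The inner product of two such combinations expands
bilinearly, and after taking expectations the orthonormality `E⟨h⁽⁰⁾_k, h⁽⁰⁾_j⟩ = δ_{k j}`
collapses the double sum to its diagonal. -/

theorem real_inner_sum_smul_sum_smul {ι κ E : Type*} [NormedAddCommGroup E]
    [InnerProductSpace ℝ E] (s : Finset ι) (t : Finset κ) (a : ι → ℝ) (b : κ → ℝ)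
    (x : ι → E) (y : κ → E) :
    inner ℝ (∑ i ∈ s, a i • x i) (∑ j ∈ t, b j • y j)
      = ∑ i ∈ s, ∑ j ∈ t, a i * b j * inner ℝ (x i) (y j) := by
  simp_rw [sum_inner, inner_sum, real_inner_smul_left, real_inner_smul_right, mul_assoc]

theorem integral_inner_sum_smul_sum_smul_of_orthonormal {Ω ι E : Type*} [MeasurableSpace Ω]
    {μ : Measure Ω} [Fintype ι] [DecidableEq ι] [NormedAddCommGroup E] [InnerProductSpace ℝ E]
    (X : ι → Ω → E) (hint : ∀ i j, Integrable (fun ω => inner ℝ (X i ω) (X j ω)) μ)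
    (horth : ∀ i j, ∫ ω, inner ℝ (X i ω) (X j ω) ∂μ = if i = j then 1 else 0)
    (a b : ι → ℝ) :
    ∫ ω, inner ℝ (∑ i, a i • X i ω) (∑ j, b j • X j ω) ∂μ = ∑ i, a i * b i := by
  simp_rw [real_inner_sum_smul_sum_smul]
  rw [integral_finsetSum _ fun i _ => integrable_finsetSum _ fun j _ => (hint i j).const_mul _]
  simp_rw [integral_finsetSum _ fun j _ => (hint _ j).const_mul _, integral_const_mul, horth]
  simp

namespace SimpleGraph

variable {V : Type*} [Fintype V] [DecidableEq V] (G : SimpleGraph V) [DecidableRel G.Adj]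

theorem eq_sum_adjMatrix_pow_smul_of_sum_neighborFinset {R M : Type*} [Semiring R]
    [AddCommMonoid M] [Module R M] (x : ℕ → V → M)
    (hx : ∀ t w, x (t + 1) w = ∑ y ∈ G.neighborFinset w, x t y) (t : ℕ) (w : V) :
    x t w = ∑ k, (G.adjMatrix R ^ t) k w • x 0 k := by
  induction t generalizing w with
  | zero => simp [Matrix.one_apply, ite_smul]
  | succ t ih =>
    simp_rw [hx, ih, pow_succ, mul_adjMatrix_apply, Finset.sum_smul]
    exact Finset.sum_comm

end SimpleGraph

theorem stmt_8_general {V : Type*} [Fintype V] [DecidableEq V]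
    (G : SimpleGraph V) [DecidableRel G.Adj]
    {d : ℕ} {Ω : Type*} [MeasurableSpace Ω] (μ : Measure Ω)
    (h : ℕ → V → Ω → EuclideanSpace ℝ (Fin d))
    (hInt : ∀ w w' : V, Integrable (fun ω => (inner ℝ (h 0 w ω) (h 0 w' ω) : ℝ)) μ)
    (hOrtho : ∀ w w' : V,
      (∫ ω, (inner ℝ (h 0 w ω) (h 0 w' ω) : ℝ) ∂μ) = if w = w' then 1 else 0)
    (hrec : ∀ (t : ℕ) (w : V) (ω : Ω), h (t + 1) w ω = ∑ x ∈ G.neighborFinset w, h t x ω)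
    (p q : ℕ) (u v : V) :
    (∫ ω, (inner ℝ (h p u ω) (h q v ω) : ℝ) ∂μ)
      = ∑ k : V, ((G.adjMatrix ℝ) ^ p) k u * ((G.adjMatrix ℝ) ^ q) k v := by
  have unroll (t : ℕ) (w : V) (ω : Ω) : h t w ω = ∑ k, (G.adjMatrix ℝ ^ t) k w • h 0 k ω :=
    G.eq_sum_adjMatrix_pow_smul_of_sum_neighborFinset (fun t w => h t w ω)
      (fun t w => hrec t w ω) t w
  simp only [unroll p u, unroll q v]
  exact integral_inner_sum_smul_sum_smul_of_orthonormal (fun k => h 0 k) hInt hOrtho _ _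

/-- Iterated sum-aggregation message passing `h^{(t)}_v = ∑_{w ∈ N(v)} h^{(t-1)}_w`
over random initial node features with `E[⟨h⁰_w, h⁰_{w'}⟩] = δ_{w w'}` satisfies,
for all `p, q ≥ 0` and all nodes `u, v`,
`E[⟨h^{(p)}_u, h^{(q)}_v⟩] = ∑_{k ∈ V} (A^p)_{k u} (A^q)_{k v}`,
where `A` is the 0/1 adjacency matrix of the graph. -/
theorem stmt_8 {V : Type*} [Fintype V] [DecidableEq V]
    (G : SimpleGraph V) [DecidableRel G.Adj]
    {d : ℕ} {Ω : Type*} [MeasurableSpace Ω] (μ : Measure Ω) [IsProbabilityMeasure μ]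
    (h : ℕ → V → Ω → EuclideanSpace ℝ (Fin d))
    (hInt : ∀ w w' : V, Integrable (fun ω => (inner ℝ (h 0 w ω) (h 0 w' ω) : ℝ)) μ)
    (hOrtho : ∀ w w' : V,
      (∫ ω, (inner ℝ (h 0 w ω) (h 0 w' ω) : ℝ) ∂μ) = if w = w' then 1 else 0)
    (hrec : ∀ (t : ℕ) (w : V) (ω : Ω), h (t + 1) w ω = ∑ x ∈ G.neighborFinset w, h t x ω)
    (p q : ℕ) (u v : V) :
    (∫ ω, (inner ℝ (h p u ω) (h q v ω) : ℝ) ∂μ)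
      = ∑ k : V, ((G.adjMatrix ℝ) ^ p) k u * ((G.adjMatrix ℝ) ^ q) k v :=
  stmt_8_general G μ h hInt hOrtho hrec p q u v
end

section
/- (Welch bound) Let d ≥ 1 and N > d be integers, and let r_1, ..., r_N be unit-norm vectors in ℝ^d. Then the mutual coherence of the set satisfies max_{1 ≤ i ≠ j ≤ N} |⟨r_i, r_j⟩| ≥ sqrt((N − d) / (d(N − 1))). -/
/-!
Let `A` be the `d × N` matrix whose columns are the vectors `r_i`, so that `G = Aᵀ A` is their
Gram matrix and `S = A Aᵀ` their frame operator. Both have trace `N`, and the sum of the squared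
entries of `G` equals that of `S`. Cauchy–Schwarz on the diagonal of the `d × d` matrix `S`
gives `N² ≤ d ∑_{i,j} ⟨r_i, r_j⟩²`. Removing the `N` diagonal terms, the `N (N - 1)` off-diagonal
squares add up to at least `N² / d - N`, so one of them is at least the average
`(N - d) / (d (N - 1))`.
-/

open Finset Matrix Module
open scoped InnerProductSpace

section Matrix

variable {m n : Type*} [Fintype m] [Fintype n]

lemma sum_sq_eq_trace_mul_transpose (X : Matrix m n ℝ) :
    ∑ i, ∑ j, X i j ^ 2 = (X * Xᵀ).trace := by
  simp [trace, mul_apply, sq]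

lemma sum_sq_transpose_mul_self (A : Matrix m n ℝ) :
    ∑ i, ∑ j, (Aᵀ * A) i j ^ 2 = ∑ a, ∑ b, (A * Aᵀ) a b ^ 2 := by
  rw [sum_sq_eq_trace_mul_transpose, sum_sq_eq_trace_mul_transpose, transpose_mul,
    transpose_transpose, transpose_mul, transpose_transpose, Matrix.mul_assoc, trace_mul_comm]
  simp only [Matrix.mul_assoc]

lemma sq_trace_le_card_mul_sum_sq (S : Matrix m m ℝ) :
    S.trace ^ 2 ≤ Fintype.card m * ∑ a, ∑ b, S a b ^ 2 := by
  calc S.trace ^ 2 ≤ Fintype.card m * ∑ a, S a a ^ 2 := sq_sum_le_card_mul_sum_sq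
    _ ≤ Fintype.card m * ∑ a, ∑ b, S a b ^ 2 := by
      gcongr with a
      exact single_le_sum (fun b _ => sq_nonneg (S a b)) (mem_univ a)

lemma sq_trace_transpose_mul_self_le (A : Matrix m n ℝ) :
    (Aᵀ * A).trace ^ 2 ≤ Fintype.card m * ∑ i, ∑ j, (Aᵀ * A) i j ^ 2 := by
  rw [trace_mul_comm, sum_sq_transpose_mul_self]
  exact sq_trace_le_card_mul_sum_sq _

end Matrix

section InnerProductSpace

variable {E : Type*} [NormedAddCommGroup E] [InnerProductSpace ℝ E]

lemma gram_eq_transpose_mul {ι κ : Type*} [Fintype κ] (b : OrthonormalBasis κ ℝ E)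
    (v : ι → E) :
    gram ℝ v = (of fun a i => ⟪b a, v i⟫_ℝ)ᵀ * of fun a i => ⟪b a, v i⟫_ℝ := by
  ext i j
  simp [mul_apply, ← b.sum_inner_mul_inner (v i) (v j), real_inner_comm]

lemma sq_sum_norm_sq_le_finrank_mul_sum_sq_inner [FiniteDimensional ℝ E] {ι : Type*}
    [Fintype ι] (v : ι → E) :
    (∑ i, ‖v i‖ ^ 2) ^ 2 ≤ finrank ℝ E * ∑ i, ∑ j, ⟪v i, v j⟫_ℝ ^ 2 := by
  have h := sq_trace_transpose_mul_self_le (of fun a i => ⟪stdOrthonormalBasis ℝ E a, v i⟫_ℝ)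
  rw [← gram_eq_transpose_mul] at h
  simpa [trace, real_inner_self_eq_norm_sq] using h

end InnerProductSpace

lemma exists_ne_le_of_mul_le_sum_sub_diag {ι : Type*} [Fintype ι] [Nontrivial ι]
    (f : ι → ι → ℝ) {c : ℝ}
    (h : Fintype.card ι * (Fintype.card ι - 1) * c ≤ ∑ i, ∑ j, f i j - ∑ i, f i i) :
    ∃ i j, i ≠ j ∧ c ≤ f i j := by
  classical
  have hsum : ∑ p ∈ univ.offDiag, f p.1 p.2 = ∑ i, ∑ j, f i j - ∑ i, f i i := by
    rw [eq_sub_iff_add_eq, ← sum_diag univ fun p => f p.1 p.2, add_comm,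
      ← sum_union (disjoint_diag_offDiag _), diag_union_offDiag, sum_product]
  have hcard : (#(univ.offDiag : Finset (ι × ι)) : ℝ) =
      Fintype.card ι * (Fintype.card ι - 1) := by
    rw [offDiag_card, card_univ, ← Nat.mul_sub_one, Nat.cast_mul,
      Nat.cast_pred Fintype.card_pos]
  obtain ⟨i, j, hij⟩ := exists_pair_ne ι
  obtain ⟨p, hp, hle⟩ := exists_le_of_sum_le (s := univ.offDiag)
    ⟨(i, j), by simpa using hij⟩ (f := fun _ => c) (g := fun p => f p.1 p.2)
    (by rwa [sum_const, nsmul_eq_mul, hcard, hsum])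
  exact ⟨p.1, p.2, (mem_offDiag.mp hp).2.2, hle⟩

theorem stmt_9_general {d N : ℕ} (hdN : d < N)
    (r : Fin N → EuclideanSpace ℝ (Fin d))
    (hunit : ∀ i, ‖r i‖ = 1) :
    ∃ i j : Fin N, i ≠ j ∧
      Real.sqrt (((N : ℝ) - (d : ℝ)) / ((d : ℝ) * ((N : ℝ) - 1)))
        ≤ |(inner ℝ (r i) (r j) : ℝ)| := by
  have hframe := sq_sum_norm_sq_le_finrank_mul_sum_sq_inner r
  simp only [hunit, one_pow, sum_const, card_univ, Fintype.card_fin, nsmul_eq_mul, mul_one,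
    finrank_euclideanSpace_fin] at hframe
  have hd : 0 < d := by
    rcases Nat.eq_zero_or_pos d with rfl | hd
    · simp only [CharP.cast_eq_zero, zero_mul, sq_nonpos_iff, Nat.cast_eq_zero] at hframe
      omega
    · exact hd
  have : Nontrivial (Fin N) := Fin.nontrivial_iff_two_le.mpr (by omega)
  have hN : (N : ℝ) - 1 ≠ 0 := sub_ne_zero.mpr (by exact_mod_cast (show N ≠ 1 by omega))
  have hdiag : ∑ i, ⟪r i, r i⟫_ℝ ^ 2 = N := by simp [hunit]
  have havg : (N : ℝ) * (N - 1) * (((N : ℝ) - d) / (d * (N - 1))) = N ^ 2 / d - N := by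
    field_simp
  have hoff : (N : ℝ) * (N - 1) * (((N : ℝ) - d) / (d * (N - 1)))
      ≤ ∑ i, ∑ j, ⟪r i, r j⟫_ℝ ^ 2 - ∑ i, ⟪r i, r i⟫_ℝ ^ 2 := by
    rw [hdiag, havg]
    linarith [(div_le_iff₀' (by positivity : (0 : ℝ) < d)).mpr hframe]
  obtain ⟨i, j, hij, hle⟩ :=
    exists_ne_le_of_mul_le_sum_sub_diag _ (by rwa [Fintype.card_fin])
  exact ⟨i, j, hij, (Real.sqrt_le_sqrt hle).trans_eq (Real.sqrt_sq_eq_abs _)⟩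

/-- Welch bound: for `N > d ≥ 1` unit-norm vectors `r_1, …, r_N` in `ℝ^d`, the mutual
coherence `max_{i ≠ j} |⟨r_i, r_j⟩|` is at least `√((N − d) / (d (N − 1)))`. -/
theorem stmt_9 {d N : ℕ} (hd : 1 ≤ d) (hdN : d < N)
    (r : Fin N → EuclideanSpace ℝ (Fin d))
    (hunit : ∀ i, ‖r i‖ = 1) :
    ∃ i j : Fin N, i ≠ j ∧
      Real.sqrt (((N : ℝ) - (d : ℝ)) / ((d : ℝ) * ((N : ℝ) - 1)))
        ≤ |(inner ℝ (r i) (r j) : ℝ)| :=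
  stmt_9_general hdN r hunit
end
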